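/- Fix α ∈ [1, 3/2] and ε > 0. Assume the sum-product inequality: for every B ⊂ [1,2] that is 1/N-separated with δ = N^{-α}, one has |B|² ≤ C_ε (N^{1-α+ε} · N(B+B,δ)·N(B·B,δ) + N^{2α-1}). Let A = {1 + i/N : 1 ≤ i ≤ N} and G = {q^i : 1 ≤ i ≤ N} with q^N - 1 ≥ c > 0. Then |G ∩ E_δ(A)| ≤ C'_ε N^{max{α - 1/2, (3-α)/2} + ε}. -/

import Mathlib

/-!
Let `B` be the part of `G ∩ E_δ(A)` lying in `[1, 2]`. From `q ^ N ≥ 1 + c` we get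
`q - 1 ≥ log (1 + c) / N`, so `G` is `1/(kN)`-separated for a fixed integer `k`, and the
sum–product inequality applies to `B` at the scale `1/(kN)`. The products `B·B` lie in
`{q ^ i : 2 ≤ i ≤ 2N}`, and the sums `B + B` lie within `2δ` of the `2N` points `2 + i/N`, so
both packing numbers are `O(N)` and the inequality gives `|B|² ≲ N^{3-α+ε} + N^{2α-1}`. The points
of `G ∩ E_δ(A)` above `2` lie in `[2, 2 + δ]` with `δ ≤ 1/N`, so there are at most `k + 1` of them.
-/

open Pointwise Classical

/-- `packingNumber S δ` is the maximal cardinality of a `δ`-separated subset of `S`. -/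
noncomputable def packingNumber (S : Set ℝ) (δ : ℝ) : ℕ :=
  sSup {n : ℕ | ∃ T : Finset ℝ, ↑T ⊆ S ∧
    (∀ x ∈ T, ∀ y ∈ T, x ≠ y → δ ≤ |x - y|) ∧ T.card = n}

open Finset

lemma card_le_div_add_one_of_pairwise_le_abs_sub {T : Finset ℝ} {a b s : ℝ} (hs : 0 < s)
    (hab : a ≤ b) (hT : ∀ x ∈ T, x ∈ Set.Icc a b)
    (hsep : (T : Set ℝ).Pairwise fun x y => s ≤ |x - y|) :
    (#T : ℝ) ≤ (b - a) / s + 1 := by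
  have hfloor (x : ℝ) (hx : x ∈ T) :
      (⌊(x - a) / s⌋₊ : ℝ) ≤ (x - a) / s ∧ (x - a) / s < ⌊(x - a) / s⌋₊ + 1 :=
    ⟨Nat.floor_le (div_nonneg (sub_nonneg.2 (hT x hx).1) hs.le), Nat.lt_floor_add_one _⟩
  have hcard : #T ≤ #(range (⌊(b - a) / s⌋₊ + 1)) := by
    refine card_le_card_of_injOn (fun x => ⌊(x - a) / s⌋₊) (fun x hx => ?_)
      (fun x hx y hy hxy => ?_)
    · simpa [Nat.lt_succ_iff] using Nat.floor_le_floor (by gcongr; exact (hT x hx).2)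
    · by_contra hne
      have hxy' : (⌊(x - a) / s⌋₊ : ℝ) = ⌊(y - a) / s⌋₊ := congrArg Nat.cast hxy
      have hdiff : |(x - a) / s - (y - a) / s| < 1 := by
        rw [abs_sub_lt_iff]; constructor <;> linarith [hfloor x hx, hfloor y hy]
      rw [← sub_div, sub_sub_sub_cancel_right, abs_div, abs_of_pos hs, div_lt_one hs] at hdiff
      exact (hsep hx hy hne).not_gt hdiff
  calc (#T : ℝ) ≤ ⌊(b - a) / s⌋₊ + 1 := by exact_mod_cast (card_range _ ▸ hcard)
    _ ≤ (b - a) / s + 1 := by gcongr; exact Nat.floor_le (div_nonneg (sub_nonneg.2 hab) hs.le)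

lemma packingNumber_le {S : Set ℝ} {δ m : ℝ}
    (h : ∀ T : Finset ℝ, ↑T ⊆ S → (T : Set ℝ).Pairwise (fun x y => δ ≤ |x - y|) → (#T : ℝ) ≤ m) :
    (packingNumber S δ : ℝ) ≤ m := by
  have hm : 0 ≤ m := by simpa using h ∅ (by simp) (by simp)
  have : packingNumber S δ ≤ ⌊m⌋₊ := by
    refine csSup_le ⟨0, ∅, by simp, by simp, rfl⟩ ?_
    rintro n ⟨T, hTS, hT, rfl⟩
    exact Nat.le_floor (h T hTS hT)
  exact (Nat.cast_le.2 this).trans (Nat.floor_le hm)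

lemma packingNumber_coe_le_card (F : Finset ℝ) (δ : ℝ) : (packingNumber F δ : ℝ) ≤ #F :=
  packingNumber_le fun _ hT _ => Nat.cast_le.2 (card_le_card (coe_subset.1 hT))

lemma packingNumber_le_card_mul_of_forall_exists_abs_sub_le {ι : Type*} {S : Set ℝ} {δ r : ℝ}
    (I : Finset ι) (c : ι → ℝ) (hδ : 0 < δ) (hr : 0 ≤ r)
    (hS : ∀ x ∈ S, ∃ i ∈ I, |x - c i| ≤ r) :
    (packingNumber S δ : ℝ) ≤ #I * (2 * r / δ + 1) := by
  refine packingNumber_le fun T hTS hT => ?_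
  have hcover : T ⊆ I.biUnion fun i => T.filter fun x => |x - c i| ≤ r := fun x hx => by
    obtain ⟨i, hi, hxi⟩ := hS x (hTS hx)
    exact mem_biUnion.2 ⟨i, hi, mem_filter.2 ⟨hx, hxi⟩⟩
  have hfiber (i : ι) : (#(T.filter fun x => |x - c i| ≤ r) : ℝ) ≤ 2 * r / δ + 1 := by
    have := card_le_div_add_one_of_pairwise_le_abs_sub hδ (by linarith : c i - r ≤ c i + r)
      (fun x hx => ?_) (hT.mono (filter_subset (fun x => |x - c i| ≤ r) T))
    · rwa [show c i + r - (c i - r) = 2 * r by ring] at this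
    · have := abs_le.1 (mem_filter.1 hx).2
      constructor <;> linarith
  calc (#T : ℝ) ≤ ∑ i ∈ I, (#(T.filter fun x => |x - c i| ≤ r) : ℝ) := by
        exact_mod_cast (card_le_card hcover).trans card_biUnion_le
    _ ≤ #I * (2 * r / δ + 1) := by
        exact (sum_le_card_nsmul I _ _ fun i _ => hfiber i).trans_eq (nsmul_eq_mul _ _)

lemma sub_one_le_pow_sub_pow {q : ℝ} (hq : 1 ≤ q) {i j : ℕ} (hij : i < j) :
    q - 1 ≤ q ^ j - q ^ i := by
  have h1 : 1 ≤ q ^ i := one_le_pow₀ hq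
  have h2 : q ^ i * q ≤ q ^ j := by rw [← pow_succ]; exact pow_le_pow_right₀ hq hij
  nlinarith

lemma pairwise_sub_one_le_abs_sub_of_subset_image_pow {q : ℝ} (hq : 1 ≤ q) {I : Finset ℕ}
    {B : Finset ℝ} (hB : B ⊆ I.image (q ^ ·)) :
    (B : Set ℝ).Pairwise fun x y => q - 1 ≤ |x - y| := by
  intro x hx y hy hxy
  obtain ⟨i, -, rfl⟩ := mem_image.1 (hB hx)
  obtain ⟨j, -, rfl⟩ := mem_image.1 (hB hy)
  rcases lt_or_gt_of_ne (ne_of_apply_ne _ hxy) with hij | hij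
  · rw [abs_sub_comm]; exact (sub_one_le_pow_sub_pow hq hij).trans (le_abs_self _)
  · exact (sub_one_le_pow_sub_pow hq hij).trans (le_abs_self _)

lemma one_le_mul_sub_one_of_le_pow_sub_one {c q : ℝ} {N k : ℕ} (hc : 0 < c) (hq : 0 < q)
    (hcq : c ≤ q ^ N - 1) (hk : (Real.log (1 + c))⁻¹ ≤ k) : 1 ≤ k * N * (q - 1) := by
  have hlog : 0 < Real.log (1 + c) := Real.log_pos (by linarith)
  calc 1 ≤ Real.log (1 + c) * k := (inv_le_iff_one_le_mul₀' hlog).1 hk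
    _ ≤ N * Real.log q * k := by
      gcongr; rw [← Real.log_pow]; exact Real.log_le_log (by linarith) (by linarith)
    _ ≤ N * (q - 1) * k := by gcongr; exact Real.log_le_sub_one_of_pos hq
    _ = k * N * (q - 1) := by ring

section GeometricNearArithmetic

variable {N : ℕ} {q δ : ℝ} {B : Finset ℝ}

lemma packingNumber_add_le (hδ : 0 ≤ δ) {δ' : ℝ} (hδ' : 0 < δ')
    (hBA : ∀ x ∈ B, ∃ i ∈ Icc 1 N, |x - (1 + (i : ℝ) / N)| ≤ δ) :
    (packingNumber (↑B + ↑B) δ' : ℝ) ≤ 2 * N * (4 * δ / δ' + 1) := by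
  have := packingNumber_le_card_mul_of_forall_exists_abs_sub_le (S := ↑B + ↑B) (Icc 1 (2 * N))
    (fun k : ℕ => 2 + (k : ℝ) / N) hδ' (by positivity : 0 ≤ 2 * δ) ?_
  · convert this using 2 <;> simp; ring
  rintro _ ⟨a, ha, b, hb, rfl⟩
  obtain ⟨i, hi, hai⟩ := hBA a ha
  obtain ⟨j, hj, hbj⟩ := hBA b hb
  refine ⟨i + j, by simp only [mem_Icc] at hi hj ⊢; omega, ?_⟩
  calc |a + b - (2 + ((i + j : ℕ) : ℝ) / N)| = |(a - (1 + i / N)) + (b - (1 + j / N))| := by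
        push_cast; ring_nf
    _ ≤ 2 * δ := by linarith [abs_add_le (a - (1 + i / N)) (b - (1 + j / N))]

lemma packingNumber_mul_le (hBG : B ⊆ (Icc 1 N).image (q ^ ·)) :
    (packingNumber (↑B * ↑B) δ : ℝ) ≤ 2 * N := by
  have hsub : B * B ⊆ (Icc 1 (2 * N)).image (q ^ ·) := by
    intro x hx
    obtain ⟨a, ha, b, hb, rfl⟩ := mem_mul.1 hx
    obtain ⟨i, hi, rfl⟩ := mem_image.1 (hBG ha)
    obtain ⟨j, hj, rfl⟩ := mem_image.1 (hBG hb)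
    simp only [mem_Icc] at hi hj
    exact mem_image.2 ⟨i + j, mem_Icc.2 ⟨by omega, by omega⟩, pow_add q i j⟩
  calc (packingNumber (↑B * ↑B) δ : ℝ) ≤ #(B * B) := coe_mul B B ▸ packingNumber_coe_le_card _ _
    _ ≤ #(Icc 1 (2 * N)) := by exact_mod_cast (card_le_card hsub).trans card_image_le
    _ = 2 * N := by simp

lemma card_filter_two_lt_le (hq : 1 < q) (hδ : 0 ≤ δ) (hBG : B ⊆ (Icc 1 N).image (q ^ ·))
    (hBA : ∀ x ∈ B, ∃ i ∈ Icc 1 N, |x - (1 + (i : ℝ) / N)| ≤ δ) :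
    (#(B.filter (2 < ·)) : ℝ) ≤ δ / (q - 1) + 1 := by
  have hIcc (x : ℝ) (hx : x ∈ B.filter (2 < ·)) : x ∈ Set.Icc 2 (2 + δ) := by
    obtain ⟨hxB, hx2⟩ := mem_filter.1 hx
    obtain ⟨i, hi, hxi⟩ := hBA x hxB
    have : (i : ℝ) / N ≤ 1 := div_le_one_of_le₀ (by exact_mod_cast (mem_Icc.1 hi).2) N.cast_nonneg
    exact ⟨hx2.le, by linarith [(abs_le.1 hxi).2]⟩
  simpa using card_le_div_add_one_of_pairwise_le_abs_sub (sub_pos.2 hq) (by linarith) hIcc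
    (pairwise_sub_one_le_abs_sub_of_subset_image_pow hq.le ((filter_subset _ B).trans hBG))

end GeometricNearArithmetic

def SumProductInequality (α ε C : ℝ) : Prop :=
  ∀ (N : ℕ) (B : Finset ℝ), 0 < N →
    (↑B : Set ℝ) ⊆ Set.Icc 1 2 →
    (∀ x ∈ B, ∀ y ∈ B, x ≠ y → 1 / (N : ℝ) ≤ |x - y|) →
    ((B.card : ℝ)) ^ 2 ≤ C * ((N : ℝ) ^ (1 - α + ε) *
      ((packingNumber (↑B + ↑B) ((N : ℝ) ^ (-α)) : ℝ) *
        (packingNumber (↑B * ↑B) ((N : ℝ) ^ (-α)) : ℝ)) + (N : ℝ) ^ (2 * α - 1))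

lemma sq_card_le_of_sumProductInequality {α ε C : ℝ} (h : SumProductInequality α ε C)
    (hC : 0 ≤ C) {N k : ℕ} (hN : 0 < N) (hk : 0 < k) {q : ℝ} (hq : 1 < q)
    (hkq : 1 ≤ k * N * (q - 1)) {B : Finset ℝ} (hB : (↑B : Set ℝ) ⊆ Set.Icc 1 2)
    (hBG : B ⊆ (Icc 1 N).image (q ^ ·))
    (hBA : ∀ x ∈ B, ∃ i ∈ Icc 1 N, |x - (1 + (i : ℝ) / N)| ≤ (N : ℝ) ^ (-α)) :
    (#B : ℝ) ^ 2 ≤ C * (4 * (k : ℝ) ^ (1 - α + ε) * (4 * (k : ℝ) ^ α + 1) * (N : ℝ) ^ (3 - α + ε)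
      + (k : ℝ) ^ (2 * α - 1) * (N : ℝ) ^ (2 * α - 1)) := by
  have hk0 : (0 : ℝ) < k := Nat.cast_pos.2 hk
  have hN0 : (0 : ℝ) < N := Nat.cast_pos.2 hN
  have hM : ((k * N : ℕ) : ℝ) = k * N := Nat.cast_mul k N
  have hsep : ∀ x ∈ B, ∀ y ∈ B, x ≠ y → 1 / ((k * N : ℕ) : ℝ) ≤ |x - y| :=
    fun x hx y hy hxy => le_trans (by rw [hM, div_le_iff₀ (by positivity)]; linarith)
      (pairwise_sub_one_le_abs_sub_of_subset_image_pow hq.le hBG hx hy hxy)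
  have hscale : (N : ℝ) ^ (-α) / ((k * N : ℕ) : ℝ) ^ (-α) = (k : ℝ) ^ α := by
    rw [hM, Real.mul_rpow hk0.le hN0.le, Real.rpow_neg hk0.le, div_mul_cancel_right₀
      (Real.rpow_pos_of_pos hN0 _).ne', inv_inv]
  have hadd := packingNumber_add_le (Real.rpow_nonneg hN0.le _)
    (Real.rpow_pos_of_pos (hM ▸ mul_pos hk0 hN0) (-α)) hBA
  rw [mul_div_assoc, hscale] at hadd
  have hN3 : (N : ℝ) ^ (3 - α + ε) = (N : ℝ) ^ (1 - α + ε) * N ^ 2 := by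
    rw [← Real.rpow_natCast, ← Real.rpow_add hN0]; norm_num; ring_nf
  refine (h (k * N) B (Nat.mul_pos hk hN) hB hsep).trans ?_
  calc _ ≤ C * (((k * N : ℕ) : ℝ) ^ (1 - α + ε) * ((2 * N * (4 * k ^ α + 1)) * (2 * N)) +
          ((k * N : ℕ) : ℝ) ^ (2 * α - 1)) := by
        gcongr
        exact packingNumber_mul_le hBG
    _ = _ := by
      rw [hM, Real.mul_rpow hk0.le hN0.le, Real.mul_rpow hk0.le hN0.le, hN3]; ring

lemma le_sqrt_mul_rpow_of_sq_le {x D n m : ℝ} (hx : 0 ≤ x) (hD : 0 ≤ D) (hn : 0 ≤ n)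
    (h : x ^ 2 ≤ D * n ^ (2 * m)) : x ≤ √D * n ^ m := by
  have hsq : n ^ (2 * m) = (n ^ m) ^ 2 := by
    rw [← Real.rpow_natCast, ← Real.rpow_mul hn, mul_comm]; norm_num
  rw [hsq] at h
  calc x ≤ √(D * (n ^ m) ^ 2) := (Real.le_sqrt hx (by positivity)).2 h
    _ = √D * n ^ m := by rw [Real.sqrt_mul hD, Real.sqrt_sq (Real.rpow_nonneg hn m)]

lemma card_filter_le_two_le_of_sumProductInequality {α ε C m : ℝ}
    (h : SumProductInequality α ε C) (hC : 0 ≤ C)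
    (hm₁ : 3 - α + ε ≤ 2 * m) (hm₂ : 2 * α - 1 ≤ 2 * m) {N k : ℕ} (hN : 0 < N) (hk : 0 < k)
    {q : ℝ} (hq : 1 < q) (hkq : 1 ≤ k * N * (q - 1)) {S : Finset ℝ}
    (hSG : S ⊆ (Icc 1 N).image (q ^ ·))
    (hSA : ∀ x ∈ S, ∃ i ∈ Icc 1 N, |x - (1 + (i : ℝ) / N)| ≤ (N : ℝ) ^ (-α)) :
    (#(S.filter (· ≤ 2)) : ℝ) ≤ √(C * (4 * (k : ℝ) ^ (1 - α + ε) * (4 * (k : ℝ) ^ α + 1)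
      + (k : ℝ) ^ (2 * α - 1))) * (N : ℝ) ^ m := by
  have hB : (↑(S.filter (· ≤ 2)) : Set ℝ) ⊆ Set.Icc 1 2 := by
    intro x hx
    obtain ⟨hxS, hx2⟩ := mem_filter.1 hx
    obtain ⟨i, -, rfl⟩ := mem_image.1 (hSG hxS)
    exact ⟨one_le_pow₀ hq.le, hx2⟩
  have hsq := sq_card_le_of_sumProductInequality h hC hN hk hq hkq hB
    ((filter_subset _ S).trans hSG) fun x hx => hSA x (mem_filter.1 hx).1
  refine le_sqrt_mul_rpow_of_sq_le (Nat.cast_nonneg _) (by positivity) N.cast_nonneg ?_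
  calc _ ≤ _ := hsq
    _ ≤ C * (4 * (k : ℝ) ^ (1 - α + ε) * (4 * (k : ℝ) ^ α + 1) * N ^ (2 * m)
          + (k : ℝ) ^ (2 * α - 1) * N ^ (2 * m)) := by
      have hN1 : (1 : ℝ) ≤ N := Nat.one_le_cast.2 hN
      gcongr
    _ = _ := by ring

lemma card_le_of_sumProductInequality {α ε C m : ℝ} (h : SumProductInequality α ε C)
    (hC : 0 ≤ C) (hα : 1 ≤ α) (hm₁ : 3 - α + ε ≤ 2 * m) (hm₂ : 2 * α - 1 ≤ 2 * m) {N k : ℕ}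
    (hN : 0 < N) (hk : 0 < k) {q : ℝ} (hq : 1 < q) (hkq : 1 ≤ k * N * (q - 1)) {S : Finset ℝ}
    (hSG : S ⊆ (Icc 1 N).image (q ^ ·))
    (hSA : ∀ x ∈ S, ∃ i ∈ Icc 1 N, |x - (1 + (i : ℝ) / N)| ≤ (N : ℝ) ^ (-α)) :
    (#S : ℝ) ≤ √(C * (4 * (k : ℝ) ^ (1 - α + ε) * (4 * (k : ℝ) ^ α + 1)
      + (k : ℝ) ^ (2 * α - 1))) * (N : ℝ) ^ m + (k + 1) := by
  have hlow := card_filter_le_two_le_of_sumProductInequality h hC hm₁ hm₂ hN hk hq hkq hSG hSA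
  have hδ : (N : ℝ) ^ (-α) ≤ 1 / N := by
    rw [one_div, ← Real.rpow_neg_one]
    exact Real.rpow_le_rpow_of_exponent_le (Nat.one_le_cast.2 hN) (by linarith)
  have hhigh : (#(S.filter (2 < ·)) : ℝ) ≤ k + 1 := by
    refine (card_filter_two_lt_le hq (by positivity) hSG hSA).trans ?_
    gcongr
    rw [div_le_iff₀ (by linarith), ← mul_one ((N : ℝ) ^ (-α))]
    calc (N : ℝ) ^ (-α) * 1 ≤ 1 / N * (k * N * (q - 1)) := by gcongr
      _ = k * (q - 1) := by field_simp
  have hsplit := card_filter_add_card_filter_not (s := S) (· ≤ 2)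
  simp only [not_le] at hsplit
  calc (#S : ℝ) = #(S.filter (· ≤ 2)) + #(S.filter (2 < ·)) := by exact_mod_cast hsplit.symm
    _ ≤ _ := add_le_add hlow hhigh

theorem stmt15_general (α ε c C : ℝ) (hα1 : 1 ≤ α) (hε : 0 < ε)
    (hc : 0 < c) (hC : 0 < C)
    (h : ∀ (N : ℕ) (B : Finset ℝ), 0 < N →
      (↑B : Set ℝ) ⊆ Set.Icc 1 2 →
      (∀ x ∈ B, ∀ y ∈ B, x ≠ y → 1 / (N : ℝ) ≤ |x - y|) →
      ((B.card : ℝ)) ^ 2 ≤ C * ((N : ℝ) ^ (1 - α + ε) *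
        ((packingNumber (↑B + ↑B) ((N : ℝ) ^ (-α)) : ℝ) *
          (packingNumber (↑B * ↑B) ((N : ℝ) ^ (-α)) : ℝ)) + (N : ℝ) ^ (2 * α - 1))) :
    ∃ C' : ℝ, 0 < C' ∧ ∀ (N : ℕ) (q : ℝ), 0 < N → 1 < q → c ≤ q ^ N - 1 →
      ((((Finset.Icc 1 N).image (fun i : ℕ => q ^ i)).filter
          (fun x => ∃ i ∈ Finset.Icc 1 N, |x - (1 + (i : ℝ) / N)| ≤ (N : ℝ) ^ (-α))).card : ℝ)
        ≤ C' * (N : ℝ) ^ (max (α - 1 / 2) ((3 - α) / 2) + ε) := by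
  set k := ⌈(Real.log (1 + c))⁻¹⌉₊
  have hk : 0 < k := Nat.ceil_pos.2 (inv_pos.2 (Real.log_pos (by linarith)))
  set m := max (α - 1 / 2) ((3 - α) / 2) + ε
  have hm₁ : 3 - α + ε ≤ 2 * m := by linarith [le_max_right (α - 1 / 2) ((3 - α) / 2)]
  have hm₂ : 2 * α - 1 ≤ 2 * m := by linarith [le_max_left (α - 1 / 2) ((3 - α) / 2)]
  set D := 4 * (k : ℝ) ^ (1 - α + ε) * (4 * (k : ℝ) ^ α + 1) + (k : ℝ) ^ (2 * α - 1)
  refine ⟨√(C * D) + (k + 1), by positivity, fun N q hN hq hcq => ?_⟩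
  have hkq := one_le_mul_sub_one_of_le_pow_sub_one hc (by linarith) hcq (Nat.le_ceil _)
  have hm : 1 ≤ (N : ℝ) ^ m := Real.one_le_rpow (Nat.one_le_cast.2 hN) (by linarith)
  calc _ ≤ √(C * D) * N ^ m + (k + 1) := by
        -- `convert` absorbs the classical `DecidablePred` instance of the statement's filter
        convert card_le_of_sumProductInequality h hC.le hα1 hm₁ hm₂ hN hk hq hkq
          (filter_subset _ _) fun x hx => (mem_filter.1 hx).2
    _ ≤ √(C * D) * N ^ m + (k + 1) * N ^ m := by
        gcongr; exact le_mul_of_one_le_right (by positivity) hm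
    _ = (√(C * D) + (k + 1)) * N ^ m := by ring

/-- Assuming the sum–product inequality
`|B|² ≤ C_ε (N^{1-α+ε} N(B+B,δ) N(B·B,δ) + N^{2α-1})` for `1/N`-separated `B ⊆ [1,2]`
with `δ = N^{-α}`, the intersection of the geometric progression `G = {q^i : 1 ≤ i ≤ N}`
(with `q^N - 1 ≥ c > 0`) with the `δ`-neighborhood of the arithmetic progression
`A = {1 + i/N : 1 ≤ i ≤ N}` has at most `C'_ε N^{max(α-1/2, (3-α)/2)+ε}` elements. -/
theorem stmt15 (α ε c C : ℝ) (hα1 : 1 ≤ α) (hα2 : α ≤ 3 / 2) (hε : 0 < ε)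
    (hc : 0 < c) (hC : 0 < C)
    (h : ∀ (N : ℕ) (B : Finset ℝ), 0 < N →
      (↑B : Set ℝ) ⊆ Set.Icc 1 2 →
      (∀ x ∈ B, ∀ y ∈ B, x ≠ y → 1 / (N : ℝ) ≤ |x - y|) →
      ((B.card : ℝ)) ^ 2 ≤ C * ((N : ℝ) ^ (1 - α + ε) *
        ((packingNumber (↑B + ↑B) ((N : ℝ) ^ (-α)) : ℝ) *
          (packingNumber (↑B * ↑B) ((N : ℝ) ^ (-α)) : ℝ)) + (N : ℝ) ^ (2 * α - 1))) :
    ∃ C' : ℝ, 0 < C' ∧ ∀ (N : ℕ) (q : ℝ), 0 < N → 1 < q → c ≤ q ^ N - 1 →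
      ((((Finset.Icc 1 N).image (fun i : ℕ => q ^ i)).filter
          (fun x => ∃ i ∈ Finset.Icc 1 N, |x - (1 + (i : ℝ) / N)| ≤ (N : ℝ) ^ (-α))).card : ℝ)
        ≤ C' * (N : ℝ) ^ (max (α - 1 / 2) ((3 - α) / 2) + ε) :=
  stmt15_general α ε c C hα1 hε hc hC h
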